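/- arXiv:1611.07609 — 2 statements merged into one kernel-verified Lean document; each statement's English description precedes it below -/
import Mathlib

section
/- Let F = f + g with f convex L-smooth and g proper convex lsc, F_* = min F attained on the set Ω_*. Suppose F satisfies the HEB with θ ∈ (1/2, 1] and constant c on the ξ-sublevel set S_ξ. Then for all x ∈ S_ξ, dist(x, Ω_*) ≤ (2/L + 2c²ξ^{2θ−1}) ‖G(x)‖, where G(x) = L(x − prox_{g/L}(x − ∇f(x)/L)). -/
/-!
The proximal-gradient point `p = T x` satisfies the fundamental inequality
`F p ≤ F z + L ⟪x - p, x - z⟫ - L/2 ‖x - p‖²` for every `z`. With `z = x` it puts `p` in the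
sublevel set `S_ξ`; with `z ∈ Ω` and Cauchy–Schwarz it gives
`F p - F_* ≤ L (‖x - p‖ dist(p, Ω) + ‖x - p‖² / 2)`. As `2θ - 1 ≥ 0`, squaring the HEB at `p`
yields `dist(p, Ω)² ≤ c² ξ^(2θ-1) (F p - F_*)`, so `dist(p, Ω)` satisfies a quadratic
inequality that bounds it by a multiple of `‖x - p‖`; the triangle inequality moves the bound
from `p` to `x`.
-/

open RealInnerProductSpace Topology Filter Set AffineMap Metric

lemma le_mul_infDist_of_forall_le_mul_dist {X : Type*} [PseudoMetricSpace X] {s : Set X}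
    {x : X} {a b : ℝ} (hs : s.Nonempty) (hb : 0 ≤ b) (h : ∀ z ∈ s, a ≤ b * dist x z) :
    a ≤ b * infDist x s := by
  have := hs.to_subtype
  rw [infDist_eq_iInf, Real.mul_iInf_of_nonneg hb]
  exact le_ciInf fun z ↦ h z z.2

section ProximalGradient

variable {E : Type*} [NormedAddCommGroup E] [InnerProductSpace ℝ E]

-- `IsProx g γ v p` says `p = prox_{γ g}(v)`.
def IsProx (g : E → ℝ) (γ : ℝ) (v p : E) : Prop :=
  ∀ z, 1 / 2 * ‖p - v‖ ^ 2 + γ * g p ≤ 1 / 2 * ‖z - v‖ ^ 2 + γ * g z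

lemma IsProx.mul_le_mul_add_inner {g : E → ℝ} {γ : ℝ} {v p : E} (hp : IsProx g γ v p)
    (hg : ConvexOn ℝ univ g) (hγ : 0 ≤ γ) (z : E) :
    γ * g p ≤ γ * g z + ⟪v - p, p - z⟫ := by
  -- compare `p` with the points of the segment `[p, z]` and let them tend to `p`
  have hsmall : ∀ t ∈ Ioo (0 : ℝ) 1,
      γ * g p ≤ γ * g z + ⟪v - p, p - z⟫ + t / 2 * ‖z - p‖ ^ 2 := by
    rintro t ⟨ht0, ht1⟩
    have hmin := hp (lineMap p z t)
    have hnorm : ‖lineMap p z t - v‖ ^ 2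
        = ‖p - v‖ ^ 2 + 2 * t * ⟪p - v, z - p⟫ + t ^ 2 * ‖z - p‖ ^ 2 := by
      rw [lineMap_apply_module', show t • (z - p) + p - v = (p - v) + t • (z - p) by abel,
        norm_add_sq_real, norm_smul, real_inner_smul_right, Real.norm_of_nonneg ht0.le]
      ring
    have hconv : g (lineMap p z t) ≤ (1 - t) * g p + t * g z := by
      rw [lineMap_apply_module]
      exact hg.2 (mem_univ p) (mem_univ z) (by linarith) ht0.le (by ring)
    have hinner : ⟪p - v, z - p⟫ = ⟪v - p, p - z⟫ := by
      rw [← neg_sub v p, ← neg_sub p z, inner_neg_neg]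
    rw [hnorm, hinner] at hmin
    have : t * (γ * g p) ≤ t * (γ * g z + ⟪v - p, p - z⟫ + t / 2 * ‖z - p‖ ^ 2) := by
      nlinarith [mul_le_mul_of_nonneg_left hconv hγ]
    exact le_of_mul_le_mul_left this ht0
  have hlim : Tendsto (fun t : ℝ ↦ γ * g z + ⟪v - p, p - z⟫ + t / 2 * ‖z - p‖ ^ 2)
      (𝓝[>] 0) (𝓝 (γ * g z + ⟪v - p, p - z⟫)) := by
    have : Continuous (fun t : ℝ ↦ γ * g z + ⟪v - p, p - z⟫ + t / 2 * ‖z - p‖ ^ 2) := by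
      fun_prop
    simpa using (this.tendsto 0).mono_left nhdsWithin_le_nhds
  exact ge_of_tendsto hlim (eventually_of_mem (Ioo_mem_nhdsGT zero_lt_one) hsmall)

lemma sub_le_mul_infDist_of_forall_le_add_inner {F : E → ℝ} {Ω : Set E} {Fstar L : ℝ}
    {x p : E} (hL : 0 ≤ L) (hΩ : Ω.Nonempty) (hfs : ∀ z ∈ Ω, F z = Fstar)
    (hF : ∀ z, F p ≤ F z + L * ⟪x - p, x - z⟫ - L / 2 * ‖x - p‖ ^ 2) :
    F p - Fstar ≤ L * (‖x - p‖ * infDist p Ω + ‖x - p‖ ^ 2 / 2) := by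
  suffices F p - Fstar - L / 2 * ‖x - p‖ ^ 2 ≤ L * ‖x - p‖ * infDist p Ω by linarith
  refine le_mul_infDist_of_forall_le_mul_dist hΩ (by positivity) fun z hz ↦ ?_
  have hsplit : ⟪x - p, x - z⟫ = ‖x - p‖ ^ 2 + ⟪x - p, p - z⟫ := by
    rw [← real_inner_self_eq_norm_sq, ← inner_add_right, sub_add_sub_cancel]
  have hcs : ⟪x - p, p - z⟫ ≤ ‖x - p‖ * dist p z := by
    rw [dist_eq_norm]
    exact real_inner_le_norm _ _
  have := hF z
  rw [hfs z hz, hsplit] at this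
  nlinarith

variable [CompleteSpace E] {f : E → ℝ} {x y : E}

lemma HasGradientAt.comp_lineMap {g : E} {t : ℝ} (h : HasGradientAt f g (lineMap x y t)) :
    HasDerivAt (f ∘ lineMap x y) ⟪g, y - x⟫ t := by
  simpa using h.hasFDerivAt.comp_hasDerivAt t hasDerivAt_lineMap

lemma ConvexOn.add_inner_le_of_hasGradientAt {g : E} (hf : ConvexOn ℝ univ f)
    (h : HasGradientAt f g x) (y : E) : f x + ⟪g, y - x⟫ ≤ f y := by
  have hline : ConvexOn ℝ univ (fun t : ℝ ↦ f (lineMap x y t)) := by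
    have h := hf.comp_affineMap (lineMap (k := ℝ) x y)
    rw [preimage_univ] at h
    exact h
  have hderiv : HasDerivAt (fun t : ℝ ↦ f (lineMap x y t)) ⟪g, y - x⟫ 0 :=
    HasGradientAt.comp_lineMap (by rwa [lineMap_apply_zero])
  have := hline.le_slope_of_hasDerivAt (mem_univ 0) (mem_univ 1) zero_lt_one hderiv
  simp only [slope_def_field, lineMap_apply_one, lineMap_apply_zero, sub_zero, div_one] at this
  linarith

lemma le_add_inner_add_sq_of_lipschitz_gradient {f' : E → E} {L : ℝ}
    (hgrad : ∀ x, HasGradientAt f (f' x) x) (hlip : ∀ x y, ‖f' x - f' y‖ ≤ L * ‖x - y‖)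
    (x y : E) : f y ≤ f x + ⟪f' x, y - x⟫ + L / 2 * ‖y - x‖ ^ 2 := by
  let ψ : ℝ → ℝ := fun t ↦
    f (lineMap x y t) - t * ⟪f' x, y - x⟫ - L / 2 * ‖y - x‖ ^ 2 * t ^ 2
  have hψ : ∀ t, HasDerivAt ψ
      (⟪f' (lineMap x y t) - f' x, y - x⟫ - L * ‖y - x‖ ^ 2 * t) t := fun t ↦ by
    have h1 : HasDerivAt (f ∘ lineMap x y) ⟪f' (lineMap x y t), y - x⟫ t :=
      (hgrad _).comp_lineMap
    refine ((h1.sub ((hasDerivAt_id t).mul_const ⟪f' x, y - x⟫)).sub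
      ((hasDerivAt_pow 2 t).const_mul (L / 2 * ‖y - x‖ ^ 2))).congr_deriv ?_
    rw [inner_sub_left]
    ring
  have hψ' : ∀ t ∈ interior (Icc (0 : ℝ) 1),
      ⟪f' (lineMap x y t) - f' x, y - x⟫ - L * ‖y - x‖ ^ 2 * t ≤ 0 := by
    intro t ht
    rw [interior_Icc] at ht
    refine sub_nonpos.2 ?_
    have hdist : ‖lineMap x y t - x‖ = t * ‖y - x‖ := by
      rw [← dist_eq_norm, dist_lineMap_left, Real.norm_of_nonneg ht.1.le, dist_comm,
        dist_eq_norm]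
    calc ⟪f' (lineMap x y t) - f' x, y - x⟫ ≤ ‖f' (lineMap x y t) - f' x‖ * ‖y - x‖ :=
          real_inner_le_norm _ _
      _ ≤ L * ‖lineMap x y t - x‖ * ‖y - x‖ := by gcongr; exact hlip _ _
      _ = L * ‖y - x‖ ^ 2 * t := by rw [hdist]; ring
  have hanti : AntitoneOn ψ (Icc 0 1) :=
    antitoneOn_of_hasDerivWithinAt_nonpos (convex_Icc 0 1)
      (fun t _ ↦ (hψ t).continuousAt.continuousWithinAt)
      (fun t _ ↦ (hψ t).hasDerivWithinAt) hψ'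
  have h01 : ψ 1 ≤ ψ 0 :=
    hanti (left_mem_Icc.2 zero_le_one) (right_mem_Icc.2 zero_le_one) zero_le_one
  simp only [ψ, lineMap_apply_one, lineMap_apply_zero] at h01
  linarith

lemma IsProx.fundamental_prox_grad_ineq {g : E → ℝ} {f' : E → E} {L : ℝ} (hL : 0 < L)
    (hf : ConvexOn ℝ univ f) (hgrad : ∀ x, HasGradientAt f (f' x) x)
    (hlip : ∀ x y, ‖f' x - f' y‖ ≤ L * ‖x - y‖) (hg : ConvexOn ℝ univ g) {p : E}
    (hp : IsProx g (1 / L) (x - (1 / L) • f' x) p) (z : E) :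
    f p + g p ≤ f z + g z + L * ⟪x - p, x - z⟫ - L / 2 * ‖x - p‖ ^ 2 := by
  have hsmooth := le_add_inner_add_sq_of_lipschitz_gradient hgrad hlip x p
  have hsupport := hf.add_inner_le_of_hasGradientAt (hgrad x) z
  have hinner : ⟪x - (1 / L) • f' x - p, p - z⟫
      = ⟪x - p, x - z⟫ - ‖x - p‖ ^ 2 - 1 / L * (⟪f' x, p - x⟫ - ⟪f' x, z - x⟫) := by
    rw [← real_inner_self_eq_norm_sq, ← inner_sub_right, ← inner_sub_right,
      show x - (1 / L) • f' x - p = (x - p) - (1 / L) • f' x by abel,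
      inner_sub_left, real_inner_smul_left, show x - z - (x - p) = p - z by abel,
      show p - x - (z - x) = p - z by abel]
  have hprox : g p ≤ g z + L * ⟪x - p, x - z⟫ - L * ‖x - p‖ ^ 2
      - (⟪f' x, p - x⟫ - ⟪f' x, z - x⟫) :=
    calc g p = L * (1 / L * g p) := by field_simp
      _ ≤ L * (1 / L * g z + ⟪x - (1 / L) • f' x - p, p - z⟫) := by
        gcongr; exact hp.mul_le_mul_add_inner hg (by positivity) z
      _ = _ := by rw [hinner]; field_simp; ring
  rw [norm_sub_rev p x] at hsmooth
  linarith

end ProximalGradient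

lemma sq_le_mul_of_le_mul_rpow {c r t ξ θ : ℝ} (ht : 0 ≤ t) (hHEB : t ≤ c * r ^ θ)
    (hr : 0 ≤ r) (hrξ : r ≤ ξ) (hθ : 1 / 2 ≤ θ) :
    t ^ 2 ≤ c ^ 2 * ξ ^ (2 * θ - 1) * r :=
  calc t ^ 2 ≤ (c * r ^ θ) ^ 2 := pow_le_pow_left₀ ht hHEB 2
    _ = c ^ 2 * (r ^ (2 * θ - 1) * r) := by
        rw [← Real.rpow_add_one' hr (by linarith), mul_pow, ← Real.rpow_mul_natCast hr]
        ring_nf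
    _ ≤ c ^ 2 * (ξ ^ (2 * θ - 1) * r) := by
        gcongr
        linarith
    _ = c ^ 2 * ξ ^ (2 * θ - 1) * r := by ring

lemma le_of_sq_le_mul_add {a s t : ℝ} (ha : 0 ≤ a) (hs : 0 ≤ s)
    (h : t ^ 2 ≤ a * (s * t + s ^ 2 / 2)) : t ≤ (1 + 2 * a) * s := by
  rcases le_or_gt t s with hts | hst
  · nlinarith
  · have ht : 0 < t := hs.trans_lt hst
    have : t * t ≤ t * (3 / 2 * a * s) := by nlinarith
    nlinarith [le_of_mul_le_mul_left this ht]

theorem heb_dist_prox_grad_bound_large_theta_general {d : ℕ} (L c θ ξ : ℝ)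
    (hL : 0 < L) (hθ : θ ∈ Set.Ioc (1/2 : ℝ) 1)
    (f g : EuclideanSpace ℝ (Fin d) → ℝ)
    (f' : EuclideanSpace ℝ (Fin d) → EuclideanSpace ℝ (Fin d))
    (hconvf : ConvexOn ℝ Set.univ f)
    (hgrad : ∀ x, HasGradientAt f (f' x) x)
    (hlip : ∀ x y, ‖f' x - f' y‖ ≤ L * ‖x - y‖)
    (hconvg : ConvexOn ℝ Set.univ g)
    (T : EuclideanSpace ℝ (Fin d) → EuclideanSpace ℝ (Fin d))
    (hT : ∀ x z, 1 / 2 * ‖T x - (x - (1 / L) • f' x)‖ ^ 2 + (1 / L) * g (T x)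
        ≤ 1 / 2 * ‖z - (x - (1 / L) • f' x)‖ ^ 2 + (1 / L) * g z)
    (Ω : Set (EuclideanSpace ℝ (Fin d)))
    (hΩ : Ω = {z | ∀ y, f z + g z ≤ f y + g y}) (hne : Ω.Nonempty)
    (Fstar : ℝ) (hfs : ∀ z ∈ Ω, f z + g z = Fstar)
    (heb : ∀ x, f x + g x - Fstar ≤ ξ →
        Metric.infDist x Ω ≤ c * (f x + g x - Fstar) ^ θ)
    (x : EuclideanSpace ℝ (Fin d)) (hx : f x + g x - Fstar ≤ ξ) :
    Metric.infDist x Ω ≤ (2 / L + 2 * c ^ 2 * ξ ^ (2 * θ - 1)) * ‖L • (x - T x)‖ := by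
  obtain ⟨z₀, hz₀⟩ := hne
  have hmin : ∀ y, Fstar ≤ f y + g y := hfs z₀ hz₀ ▸ (hΩ ▸ hz₀ :)
  set p := T x
  set s := ‖x - p‖
  have hfund := IsProx.fundamental_prox_grad_ineq hL hconvf hgrad hlip hconvg (hT x)
  have hr0 : 0 ≤ f p + g p - Fstar := sub_nonneg.2 (hmin p)
  have hrξ : f p + g p - Fstar ≤ ξ := by
    have := hfund x
    simp only [sub_self, inner_zero_right, mul_zero, add_zero] at this
    nlinarith [sq_nonneg s]
  set C := c ^ 2 * ξ ^ (2 * θ - 1)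
  have hC : 0 ≤ C := by
    have := Real.rpow_nonneg (hr0.trans hrξ) (2 * θ - 1)
    positivity
  have hgap : f p + g p - Fstar ≤ L * (s * infDist p Ω + s ^ 2 / 2) :=
    sub_le_mul_infDist_of_forall_le_add_inner (F := fun y ↦ f y + g y) hL.le ⟨z₀, hz₀⟩ hfs hfund
  have hdist_p : infDist p Ω ≤ (1 + 2 * (C * L)) * s := by
    refine le_of_sq_le_mul_add (by positivity) (norm_nonneg _) ?_
    calc infDist p Ω ^ 2 ≤ C * (f p + g p - Fstar) :=
          sq_le_mul_of_le_mul_rpow infDist_nonneg (heb p hrξ) hr0 hrξ hθ.1.le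
      _ ≤ C * (L * (s * infDist p Ω + s ^ 2 / 2)) := by gcongr
      _ = C * L * (s * infDist p Ω + s ^ 2 / 2) := by ring
  calc infDist x Ω ≤ infDist p Ω + s := by
        simpa [dist_eq_norm] using infDist_le_infDist_add_dist (x := x) (y := p) (s := Ω)
    _ ≤ (1 + 2 * (C * L)) * s + s := by gcongr
    _ = (2 / L + 2 * c ^ 2 * ξ ^ (2 * θ - 1)) * ‖L • (x - p)‖ := by
        rw [norm_smul, Real.norm_of_nonneg hL.le]
        simp only [C]
        field_simp
        ring

theorem heb_dist_prox_grad_bound_large_theta {d : ℕ} (L c θ ξ : ℝ)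
    (hL : 0 < L) (hc : 0 < c) (hξ : 0 < ξ) (hθ : θ ∈ Set.Ioc (1/2 : ℝ) 1)
    (f g : EuclideanSpace ℝ (Fin d) → ℝ)
    (f' : EuclideanSpace ℝ (Fin d) → EuclideanSpace ℝ (Fin d))
    (hconvf : ConvexOn ℝ Set.univ f)
    (hgrad : ∀ x, HasGradientAt f (f' x) x)
    (hlip : ∀ x y, ‖f' x - f' y‖ ≤ L * ‖x - y‖)
    (hconvg : ConvexOn ℝ Set.univ g) (hlsc : LowerSemicontinuous g)
    (T : EuclideanSpace ℝ (Fin d) → EuclideanSpace ℝ (Fin d))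
    (hT : ∀ x z, 1 / 2 * ‖T x - (x - (1 / L) • f' x)‖ ^ 2 + (1 / L) * g (T x)
        ≤ 1 / 2 * ‖z - (x - (1 / L) • f' x)‖ ^ 2 + (1 / L) * g z)
    (Ω : Set (EuclideanSpace ℝ (Fin d)))
    (hΩ : Ω = {z | ∀ y, f z + g z ≤ f y + g y}) (hne : Ω.Nonempty)
    (Fstar : ℝ) (hfs : ∀ z ∈ Ω, f z + g z = Fstar)
    (heb : ∀ x, f x + g x - Fstar ≤ ξ →
        Metric.infDist x Ω ≤ c * (f x + g x - Fstar) ^ θ)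
    (x : EuclideanSpace ℝ (Fin d)) (hx : f x + g x - Fstar ≤ ξ) :
    Metric.infDist x Ω ≤ (2 / L + 2 * c ^ 2 * ξ ^ (2 * θ - 1)) * ‖L • (x - T x)‖ :=
  heb_dist_prox_grad_bound_large_theta_general L c θ ξ hL hθ f g f' hconvf hgrad hlip hconvg T hT Ω
    hΩ hne Fstar hfs heb x hx
end

section
/- Let f : ℝ^d → ℝ be convex and L-smooth with minimizer set Ω_* and minimum f_*. For the gradient descent iteration x_{τ+1} = x_τ − ∇f(x_τ)/L, if f satisfies HEB with θ = 1/2 and constant c on S_{ε₀} where f(x₀) − f_* ≤ ε₀, then f(x_t) − f_* ≤ ε₀/2^k whenever t ≥ k⌈c²L⌉; i.e., gradient descent converges linearly with iteration complexity O(c²L log(ε₀/ε)). -/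
/-!
Convexity and the descent lemma give, for every point `z`, the one-step estimate
`L‖x_{n+1} - z‖² + 2 (f x_{n+1} - f z) ≤ L‖x_n - z‖²`; since `f` decreases along the iterates,
telescoping yields `2T (f x_T - f z) ≤ L‖x_0 - z‖²`. Taking for `z` a minimiser nearest to
`x_s`, HEB bounds `‖x_s - z‖²` by `c² (f x_s - f_*)`, so `T = ⌈c²L⌉` further steps halve the
optimality gap. The gap never increases, so the iterates stay in the sublevel set where HEB
holds and the halving repeats.
-/

open Set

section Smooth

variable {E : Type*} [NormedAddCommGroup E] [InnerProductSpace ℝ E] [CompleteSpace E]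
  {f : E → ℝ}

theorem HasGradientAt.hasDerivAt_comp_add_smul {g x v : E} {t : ℝ}
    (h : HasGradientAt f g (x + t • v)) :
    HasDerivAt (fun s : ℝ => f (x + s • v)) (inner ℝ g v) t := by
  have hline : HasDerivAt (fun s : ℝ => x + s • v) v t := by
    simpa using ((hasDerivAt_id t).smul_const v).const_add x
  exact (h.hasFDerivAt.comp_hasDerivAt t hline).congr_deriv (by simp)

theorem ConvexOn.add_inner_gradient_le (hconv : ConvexOn ℝ univ f) {g x : E}
    (hg : HasGradientAt f g x) (z : E) :
    f x + inner ℝ g (z - x) ≤ f z := by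
  have hline : ConvexOn ℝ univ (fun s : ℝ => f (x + s • (z - x))) := by
    simpa [Function.comp_def, AffineMap.lineMap_apply, add_comm] using
      hconv.comp_affineMap (AffineMap.lineMap x z)
  have hderiv : HasDerivAt (fun s : ℝ => f (x + s • (z - x))) (inner ℝ g (z - x)) 0 :=
    HasGradientAt.hasDerivAt_comp_add_smul (by simpa using hg)
  have := hline.le_slope_of_hasDerivAt (mem_univ 0) (mem_univ 1) one_pos hderiv
  simp only [slope_def_field, zero_smul, add_zero, one_smul, add_sub_cancel, sub_zero,
    div_one] at this
  linarith

theorem le_add_inner_add_of_lipschitz_gradient {f' : E → E} {L : ℝ}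
    (hgrad : ∀ x, HasGradientAt f (f' x) x) (hlip : ∀ x y, ‖f' x - f' y‖ ≤ L * ‖x - y‖)
    (x y : E) :
    f y ≤ f x + inner ℝ (f' x) (y - x) + L / 2 * ‖y - x‖ ^ 2 := by
  set v := y - x
  set φ : ℝ → ℝ := fun t => f (x + t • v) - t * inner ℝ (f' x) v - L * ‖v‖ ^ 2 * t ^ 2 / 2
  have hφ : ∀ t, HasDerivAt φ
      (inner ℝ (f' (x + t • v)) v - inner ℝ (f' x) v - L * ‖v‖ ^ 2 * t) t := by
    intro t
    have h₁ := (hgrad (x + t • v)).hasDerivAt_comp_add_smul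
    have h₂ := (hasDerivAt_id t).mul_const (inner ℝ (f' x) v)
    have h₃ := ((hasDerivAt_pow 2 t).const_mul (L * ‖v‖ ^ 2)).div_const 2
    refine ((h₁.sub h₂).sub h₃).congr_deriv ?_
    ring
  have hdiff : Differentiable ℝ φ := fun t => (hφ t).differentiableAt
  have hanti : AntitoneOn φ (Icc 0 1) := by
    refine antitoneOn_of_deriv_nonpos (convex_Icc 0 1) hdiff.continuous.continuousOn
      hdiff.differentiableOn fun t ht => ?_
    rw [interior_Icc] at ht
    have hinner : inner ℝ (f' (x + t • v) - f' x) v ≤ L * ‖v‖ ^ 2 * t :=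
      calc inner ℝ (f' (x + t • v) - f' x) v
          ≤ ‖f' (x + t • v) - f' x‖ * ‖v‖ := real_inner_le_norm _ _
        _ ≤ L * ‖x + t • v - x‖ * ‖v‖ := by gcongr; exact hlip _ _
        _ = L * ‖v‖ ^ 2 * t := by
          rw [add_sub_cancel_left, norm_smul, Real.norm_of_nonneg ht.1.le]; ring
    rw [inner_sub_left] at hinner
    rw [(hφ t).deriv]
    linarith
  have h01 := hanti (left_mem_Icc.2 zero_le_one) (right_mem_Icc.2 zero_le_one) zero_le_one
  simp only [φ, v, zero_smul, add_zero, one_smul, add_sub_cancel, zero_mul, sub_zero,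
    one_pow, mul_one, ne_eq, OfNat.ofNat_ne_zero, not_false_eq_true, zero_pow,
    mul_zero, zero_div] at h01
  linarith

end Smooth

section GradientDescent

variable {E : Type*} [NormedAddCommGroup E] [InnerProductSpace ℝ E] [CompleteSpace E]
  {f : E → ℝ} {f' : E → E} {L : ℝ}

theorem le_sub_norm_gradient_sq_of_lipschitz_gradient (hL : L ≠ 0)
    (hgrad : ∀ x, HasGradientAt f (f' x) x) (hlip : ∀ x y, ‖f' x - f' y‖ ≤ L * ‖x - y‖)
    (y : E) :
    f (y - (1 / L) • f' y) ≤ f y - ‖f' y‖ ^ 2 / (2 * L) := by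
  have h := le_add_inner_add_of_lipschitz_gradient hgrad hlip y (y - (1 / L) • f' y)
  rw [sub_sub_cancel_left, inner_neg_right, real_inner_smul_right, real_inner_self_eq_norm_sq,
    norm_neg, norm_smul, Real.norm_eq_abs, mul_pow, sq_abs] at h
  calc f (y - (1 / L) • f' y)
      ≤ f y + -(1 / L * ‖f' y‖ ^ 2) + L / 2 * ((1 / L) ^ 2 * ‖f' y‖ ^ 2) := h
    _ = f y - ‖f' y‖ ^ 2 / (2 * L) := by field_simp; ring

theorem sq_norm_gd_step_sub_le (hL : 0 < L) (hconv : ConvexOn ℝ univ f)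
    (hgrad : ∀ x, HasGradientAt f (f' x) x) (hlip : ∀ x y, ‖f' x - f' y‖ ≤ L * ‖x - y‖)
    (y z : E) :
    L * ‖y - (1 / L) • f' y - z‖ ^ 2 + 2 * (f (y - (1 / L) • f' y) - f z)
      ≤ L * ‖y - z‖ ^ 2 := by
  have hconvex := hconv.add_inner_gradient_le (hgrad y) z
  have hdescent := le_sub_norm_gradient_sq_of_lipschitz_gradient hL.ne' hgrad hlip y
  have hexpand : L * ‖y - (1 / L) • f' y - z‖ ^ 2
      = L * ‖y - z‖ ^ 2 - 2 * inner ℝ (f' y) (y - z) + ‖f' y‖ ^ 2 / L := by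
    rw [sub_right_comm, norm_sub_sq_real, real_inner_smul_right, norm_smul, Real.norm_eq_abs,
      mul_pow, sq_abs, real_inner_comm]
    field_simp
  have hinner : inner ℝ (f' y) (z - y) = -inner ℝ (f' y) (y - z) := by
    rw [← inner_neg_right, neg_sub]
  have hquot : ‖f' y‖ ^ 2 / L = 2 * (‖f' y‖ ^ 2 / (2 * L)) := by field_simp
  linarith

variable {x : ℕ → E}

theorem antitone_comp_gd (hL : 0 < L)
    (hgrad : ∀ x, HasGradientAt f (f' x) x) (hlip : ∀ x y, ‖f' x - f' y‖ ≤ L * ‖x - y‖)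
    (hiter : ∀ n, x (n + 1) = x n - (1 / L) • f' (x n)) :
    Antitone (f ∘ x) := by
  refine antitone_nat_of_succ_le fun n => ?_
  have := le_sub_norm_gradient_sq_of_lipschitz_gradient hL.ne' hgrad hlip (x n)
  simp only [Function.comp_apply, hiter n]
  linarith [div_nonneg (sq_nonneg ‖f' (x n)‖) (by positivity : (0 : ℝ) ≤ 2 * L)]

theorem gd_sublinear_rate (hL : 0 < L) (hconv : ConvexOn ℝ univ f)
    (hgrad : ∀ x, HasGradientAt f (f' x) x) (hlip : ∀ x y, ‖f' x - f' y‖ ≤ L * ‖x - y‖)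
    (hiter : ∀ n, x (n + 1) = x n - (1 / L) • f' (x n)) (z : E) (T : ℕ) :
    L * ‖x T - z‖ ^ 2 + 2 * T * (f (x T) - f z) ≤ L * ‖x 0 - z‖ ^ 2 := by
  induction T with
  | zero => simp
  | succ n ih =>
    have hstep := sq_norm_gd_step_sub_le hL hconv hgrad hlip (x n) z
    rw [← hiter n] at hstep
    have hdecr : f (x (n + 1)) ≤ f (x n) :=
      antitone_comp_gd hL hgrad hlip hiter (Nat.le_succ n)
    push_cast
    nlinarith [(Nat.cast_nonneg n : (0 : ℝ) ≤ n)]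

theorem gd_gap_le_half (hL : 0 < L) (hconv : ConvexOn ℝ univ f)
    (hgrad : ∀ x, HasGradientAt f (f' x) x) (hlip : ∀ x y, ‖f' x - f' y‖ ≤ L * ‖x - y‖)
    (hiter : ∀ n, x (n + 1) = x n - (1 / L) • f' (x n)) {z : E} (hz : f z ≤ f (x 0))
    {c : ℝ} {T : ℕ} (hT : 0 < T) (hcT : c ^ 2 * L ≤ T)
    (hdist : ‖x 0 - z‖ ^ 2 ≤ c ^ 2 * (f (x 0) - f z)) :
    f (x T) - f z ≤ (f (x 0) - f z) / 2 := by
  have hrate := gd_sublinear_rate hL hconv hgrad hlip hiter z T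
  have hgap : 0 ≤ f (x 0) - f z := sub_nonneg.2 hz
  have hT' : (0 : ℝ) < T := Nat.cast_pos.2 hT
  have : 2 * T * (f (x T) - f z) ≤ T * (f (x 0) - f z) :=
    calc 2 * T * (f (x T) - f z) ≤ L * ‖x 0 - z‖ ^ 2 := by nlinarith [sq_nonneg ‖x T - z‖]
      _ ≤ c ^ 2 * L * (f (x 0) - f z) := by nlinarith
      _ ≤ T * (f (x 0) - f z) := mul_le_mul_of_nonneg_right hcT hgap
  nlinarith

end GradientDescent

theorem Metric.exists_mem_norm_sub_sq_le_of_infDist_le {E : Type*} [NormedAddCommGroup E]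
    [ProperSpace E] {Ω : Set E} (hΩ : IsClosed Ω) (hne : Ω.Nonempty) {y : E} {a c : ℝ}
    (ha : 0 ≤ a) (hy : Metric.infDist y Ω ≤ c * a ^ (1 / 2 : ℝ)) :
    ∃ z ∈ Ω, ‖y - z‖ ^ 2 ≤ c ^ 2 * a := by
  obtain ⟨z, hzΩ, hz⟩ := hΩ.exists_infDist_eq_dist hne y
  refine ⟨z, hzΩ, ?_⟩
  calc ‖y - z‖ ^ 2 ≤ (c * a ^ (1 / 2 : ℝ)) ^ 2 := by
        gcongr
        rw [← dist_eq_norm, ← hz]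
        exact hy
    _ = c ^ 2 * a := by
        rw [mul_pow, ← Real.sqrt_eq_rpow, Real.sq_sqrt ha]

theorem isClosed_setOf_forall_le {X α : Type*} [TopologicalSpace X] [TopologicalSpace α]
    [Preorder α] [OrderClosedTopology α] {f : X → α} (hf : Continuous f) : IsClosed {x | ∀ y, f x ≤ f y} := by
  simpa only [Set.ofPred_forall] using isClosed_iInter fun y => isClosed_le hf continuous_const

theorem le_div_two_pow_of_halving {u : ℕ → ℝ} (hu : Antitone u) {ε : ℝ} (hε : 0 ≤ ε)
    (h0 : u 0 ≤ ε) {T : ℕ} (hhalf : ∀ s, u s ≤ ε → u (s + T) ≤ u s / 2) :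
    ∀ k t : ℕ, k * T ≤ t → u t ≤ ε / 2 ^ k := by
  have hstages : ∀ k : ℕ, u (k * T) ≤ ε / 2 ^ k := by
    intro k
    induction k with
    | zero => simpa using h0
    | succ k ih =>
      have hle : u (k * T) ≤ ε := ih.trans (div_le_self hε (one_le_pow₀ one_le_two))
      calc u ((k + 1) * T) = u (k * T + T) := by rw [add_one_mul]
        _ ≤ u (k * T) / 2 := hhalf _ hle
        _ ≤ ε / 2 ^ k / 2 := by gcongr
        _ = ε / 2 ^ (k + 1) := by rw [pow_succ, div_div]
  exact fun k t hkt => (hu hkt).trans (hstages k)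

theorem gd_linear_convergence_heb_half {d : ℕ} (L c ε₀ : ℝ)
    (hL : 0 < L) (hc : 0 < c) (hε₀ : 0 < ε₀)
    (f : EuclideanSpace ℝ (Fin d) → ℝ)
    (f' : EuclideanSpace ℝ (Fin d) → EuclideanSpace ℝ (Fin d))
    (hconv : ConvexOn ℝ Set.univ f)
    (hgrad : ∀ x, HasGradientAt f (f' x) x)
    (hlip : ∀ x y, ‖f' x - f' y‖ ≤ L * ‖x - y‖)
    (Ω : Set (EuclideanSpace ℝ (Fin d)))
    (hΩ : Ω = {x | ∀ y, f x ≤ f y}) (hne : Ω.Nonempty)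
    (fstar : ℝ) (hfs : ∀ x ∈ Ω, f x = fstar)
    (heb : ∀ x, f x - fstar ≤ ε₀ →
        Metric.infDist x Ω ≤ c * (f x - fstar) ^ (1/2 : ℝ))
    (x : ℕ → EuclideanSpace ℝ (Fin d))
    (hiter : ∀ τ : ℕ, x (τ + 1) = x τ - (1 / L) • f' (x τ))
    (h0 : f (x 0) - fstar ≤ ε₀) :
    ∀ k t : ℕ, k * ⌈c ^ 2 * L⌉₊ ≤ t → f (x t) - fstar ≤ ε₀ / 2 ^ k := by
  obtain ⟨z₀, hz₀⟩ := hne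
  have hΩmin : ∀ z ∈ Ω, ∀ w, f z ≤ f w := fun z hz => by rw [hΩ] at hz; exact hz
  have hmin : ∀ w, fstar ≤ f w := hfs z₀ hz₀ ▸ hΩmin z₀ hz₀
  have hclosed : IsClosed Ω := hΩ ▸ isClosed_setOf_forall_le
    (continuous_iff_continuousAt.2 fun w => (hgrad w).differentiableAt.continuousAt)
  have hT : 0 < ⌈c ^ 2 * L⌉₊ := Nat.ceil_pos.2 (by positivity)
  refine le_div_two_pow_of_halving (u := fun n => f (x n) - fstar)
    (fun s t hst => sub_le_sub_right (antitone_comp_gd hL hgrad hlip hiter hst) _)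
    hε₀.le h0 fun s hs => ?_
  obtain ⟨z, hzΩ, hdist⟩ := Metric.exists_mem_norm_sub_sq_le_of_infDist_le hclosed ⟨z₀, hz₀⟩
    (sub_nonneg.2 (hmin (x s))) (heb (x s) hs)
  rw [← hfs z hzΩ] at hdist ⊢
  exact gd_gap_le_half (x := fun n => x (s + n)) hL hconv hgrad hlip (fun n => hiter (s + n))
    (hΩmin z hzΩ (x s)) hT (Nat.le_ceil _) hdist
end
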